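/- Let p ∈ (0,1) be fixed. Then the sequence (α_s(p))_{s ≥ 1} is strictly increasing in s and converges to 2p/(1+p) as s → ∞. In particular α_1(p) = p and α_s(p) > p for all integers s > 1. -/

import Mathlib

open Filter

/-- `t_{K_s}(p) = -(1/s) log (2((1+p)/2)^s - p^s)`. -/
noncomputable def cliqueThreshold (p : ℝ) (s : ℕ) : ℝ :=
  -(1 / s) * Real.log (2 * ((1 + p) / 2) ^ s - p ^ s)

/-- `α_s(p) = p (2((1+p)/2)^(s-1) - p^(s-1)) / (2((1+p)/2)^s - p^s)`. -/
noncomputable def alphaS (p : ℝ) (s : ℕ) : ℝ :=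
  p * (2 * ((1 + p) / 2) ^ (s - 1) - p ^ (s - 1)) /
    (2 * ((1 + p) / 2) ^ s - p ^ s)

/-- **Remark (monotonicity and limit of `α_s(p)` in `s`).** For fixed `p ∈ (0,1)`,
the sequence `(α_s(p))_{s ≥ 1}` is strictly increasing and converges to
`2p/(1+p)`; in particular `α_1(p) = p` and `α_s(p) > p` for all `s > 1`. -/
theorem alphaS_strictMono_tendsto (p : ℝ) (hp : p ∈ Set.Ioo (0 : ℝ) 1) :
    (∀ s : ℕ, 1 ≤ s → alphaS p s < alphaS p (s + 1)) ∧
    Tendsto (fun s : ℕ => alphaS p s) atTop (nhds (2 * p / (1 + p))) ∧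
    alphaS p 1 = p ∧
    ∀ s : ℕ, 1 < s → p < alphaS p s := by
  obtain ⟨hp0, hp1⟩ := hp
  obtain ⟨q, hq⟩ : ∃ q : ℝ, q = (1 + p) / 2 := ⟨_, rfl⟩
  have hq0 : 0 < q := by rw [hq]; linarith
  have hpq : p < q := by rw [hq]; linarith
  have hD : ∀ s : ℕ, 0 < 2 * q ^ s - p ^ s := by
    intro s
    have h1 : p ^ s ≤ q ^ s := pow_le_pow_left₀ hp0.le hpq.le s
    have h2 : 0 < q ^ s := pow_pos hq0 s
    linarith
  have key : ∀ k : ℕ, alphaS p (k + 1)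
      = p * (2 * q ^ k - p ^ k) / (2 * q ^ (k + 1) - p ^ (k + 1)) := by
    intro k
    simp [alphaS, hq]
  have hmono : ∀ s : ℕ, 1 ≤ s → alphaS p s < alphaS p (s + 1) := by
    intro s hs
    obtain ⟨k, rfl⟩ : ∃ k, s = k + 1 := ⟨s - 1, by omega⟩
    rw [key k, key (k + 1)]
    rw [div_lt_div_iff₀ (hD (k + 1)) (hD (k + 2))]
    have ha : 0 < q ^ k := pow_pos hq0 k
    have hb : 0 < p ^ k := pow_pos hp0 k
    have hqp2 : 0 < (q - p) ^ 2 := pow_pos (by linarith) 2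
    have e1 : q ^ (k + 1) = q ^ k * q := pow_succ q k
    have e2 : p ^ (k + 1) = p ^ k * p := pow_succ p k
    have e3 : q ^ (k + 2) = q ^ k * q * q := by rw [pow_succ, pow_succ]
    have e4 : p ^ (k + 2) = p ^ k * p * p := by rw [pow_succ, pow_succ]
    rw [e1, e2, e3, e4]
    nlinarith [mul_pos (mul_pos (mul_pos hp0 ha) hb) hqp2]
  have hform : ∀ s : ℕ, alphaS p (s + 1)
      = p * (2 - (p / q) ^ s) / (2 * q - p * (p / q) ^ s) := by
    intro s
    rw [key s, show ((p / q):ℝ) ^ s = p ^ s / q ^ s from div_pow p q s]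
    have hqs : (0:ℝ) < q ^ s := pow_pos hq0 s
    have heq : 2 * q - p * (p ^ s / q ^ s) = (2 * q ^ (s + 1) - p ^ (s + 1)) / q ^ s := by
      rw [eq_div_iff hqs.ne', pow_succ, pow_succ]
      field_simp
    have hden : 0 < 2 * q - p * (p ^ s / q ^ s) := by
      rw [heq]; exact div_pos (hD (s + 1)) hqs
    have heq2 : 2 - p ^ s / q ^ s = (2 * q ^ s - p ^ s) / q ^ s := by
      rw [eq_div_iff hqs.ne']
      field_simp
    rw [heq, heq2, mul_div_assoc, mul_div_assoc,
      div_div_div_cancel_right₀ hqs.ne' (2 * q ^ s - p ^ s) (2 * q ^ (s + 1) - p ^ (s + 1))]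
  have hr1 : p / q < 1 := (div_lt_one hq0).2 hpq
  have hrt : Tendsto (fun s : ℕ => (p / q) ^ s) atTop (nhds 0) :=
    tendsto_pow_atTop_nhds_zero_of_lt_one (by positivity) hr1
  have hcont : ContinuousAt (fun x : ℝ => p * (2 - x) / (2 * q - p * x)) 0 := by
    apply ContinuousAt.div
    · fun_prop
    · fun_prop
    · simp only [mul_zero, sub_zero]
      positivity
  have hval : p * (2 - (0:ℝ)) / (2 * q - p * 0) = 2 * p / (1 + p) := by
    rw [hq, mul_zero, sub_zero, sub_zero]; congr 1 <;> ring
  have htend : Tendsto (fun s : ℕ => alphaS p s) atTop (nhds (2 * p / (1 + p))) := by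
    rw [← tendsto_add_atTop_iff_nat 1]
    have : Tendsto (fun s : ℕ => p * (2 - (p / q) ^ s) / (2 * q - p * (p / q) ^ s))
        atTop (nhds (2 * p / (1 + p))) := by
      have h := hcont.tendsto.comp hrt
      have hval2 : p * 2 / (2 * q) = 2 * p / (1 + p) := by
        rw [hq]; field_simp
      simpa [Function.comp_def, hval2] using h
    exact this.congr fun s => (hform s).symm
  have h1 : alphaS p 1 = p := by
    simp [alphaS, hq]
    field_simp
    norm_num
  refine ⟨hmono, htend, h1, ?_⟩
  intro s hs
  induction s with
  | zero => omega
  | succ n ih =>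
    rcases Nat.lt_or_ge 1 n with h | h
    · exact lt_trans (ih h) (hmono n (by omega))
    · interval_cases n
      · omega
      · have := hmono 1 le_rfl
        rw [h1] at this
        exact this
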